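/- Let r ≥ 3 be an integer and let T be a tree with at least 2 vertices in which every non-leaf vertex has degree at least r. Writing v(T), e(T) and ℓ(T) for the number of vertices, edges and leaves of T respectively, we have (v(T) − ℓ(T))/e(T) ≤ (ℓ(T) − 2)/((r − 1)(ℓ(T) − 1) − 1). -/

import Mathlib

/-!
Let `L` and `M` count the leaves and the non-leaves. A tree has `L + M - 1` edges, so the handshake
lemma gives `L + r M ≤ 2 (L + M - 1)`, i.e. `(r - 2) M ≤ L - 2`. After clearing denominators the
claimed inequality reads `M ((r - 1)(L - 1) - 1) ≤ (L - 2)(L + M - 1)`, and the difference of the two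
sides is exactly `(L - 1)(L - 2 - (r - 2) M) ≥ 0`.
-/

open Real

namespace Paper

/-- `G` contains a copy of `H`, i.e. `H` is a subgraph of `G` (up to injective homomorphism). -/
def ContainsCopy {α : Type*} {β : Type*} (G : SimpleGraph α) (H : SimpleGraph β) : Prop :=
  ∃ f : H →g G, Function.Injective f

/-- The Turán (extremal) number: the maximum possible number of edges of an `n`-vertex graph
containing no copy of `H`. -/
noncomputable def exNumber (n : ℕ) {β : Type*} (H : SimpleGraph β) : ℕ :=
  sSup {N : ℕ | ∃ G : SimpleGraph (Fin n), ¬ ContainsCopy G H ∧ N = G.edgeSet.ncard}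

/-- The (directed) edge relation of the graph `H_{k,ℓ}`, with `0`-based rows in `Fin (4k)`
and columns in `Fin (2ℓ)`.  Row `a` (0-based) corresponds to row `a+1` (1-based) of the paper,
and similarly for columns. -/
def HRel (k ℓ : ℕ) (p q : Fin (4 * k) × Fin (2 * ℓ)) : Prop :=
  -- matching edges `x_{2i-1,j} x_{2i,j}`
  (p.2 = q.2 ∧ (p.1 : ℕ) % 2 = 0 ∧ (q.1 : ℕ) = (p.1 : ℕ) + 1)
  ∨ ((q.2 : ℕ) = ((p.2 : ℕ) + 1) % (2 * ℓ) ∧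
      -- edges `x_{1,j} x_{1,j+1}` and `x_{4k,j} x_{4k,j+1}`
      ((p.1 = q.1 ∧ ((p.1 : ℕ) = 0 ∨ (p.1 : ℕ) = 4 * k - 1))
        -- edges `x_{2i,j} x_{2i+1,j+1}`
        ∨ ((p.1 : ℕ) % 2 = 1 ∧ (q.1 : ℕ) = (p.1 : ℕ) + 1)
        -- edges `x_{2i+1,j} x_{2i,j+1}`
        ∨ ((p.1 : ℕ) % 2 = 0 ∧ (q.1 : ℕ) + 1 = (p.1 : ℕ))))

/-- The graph `H_{k,ℓ}` from the paper. -/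
def HGraph (k ℓ : ℕ) : SimpleGraph (Fin (4 * k) × Fin (2 * ℓ)) :=
  SimpleGraph.fromRel (HRel k ℓ)

/-- The number of homomorphic `m`-cycles of `G`, i.e. `hom(C_m, G)`. -/
noncomputable def homCount {V : Type*} (G : SimpleGraph V) (m : ℕ) : ℕ :=
  Nat.card {x : ZMod m → V // ∀ i, G.Adj (x i) (x (i + 1))}

/-- The number of (unlabelled) copies of `C₄` in `G`. -/
noncomputable def c4Count {V : Type*} (G : SimpleGraph V) : ℕ :=
  Nat.card {x : ZMod 4 → V // Function.Injective x ∧ ∀ i, G.Adj (x i) (x (i + 1))} / 8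

/-- The number of (unlabelled) copies of `C₄` in `G` containing the edge `e`. -/
noncomputable def c4CountEdge {V : Type*} (G : SimpleGraph V) (e : Sym2 V) : ℕ :=
  Nat.card {x : ZMod 4 → V // Function.Injective x ∧ (∀ i, G.Adj (x i) (x (i + 1))) ∧
    ∃ i, s(x i, x (i + 1)) = e} / 8

/-- Definition 2.1: a `β`-good set `C ⊆ V(G)^{8k}`. -/
def IsGood {V : Type*} (G : SimpleGraph V) (k : ℕ) (β : ℝ) (C : Set (ZMod (8 * k) → V)) :
    Prop :=
  ∃ s : ℝ, 0 < s ∧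
    (∀ x ∈ C, Function.Injective x ∧ ∀ i, G.Adj (x i) (x (i + 1))) ∧
    (∀ y ∈ C, ∀ i : ZMod (8 * k),
      (({x ∈ C | ∀ j, j ≠ i → x j = y j}).ncard : ℝ) ≤ s) ∧
    (∀ i : ZMod (8 * k),
      (({y : {j : ZMod (8 * k) // j ≠ i + 1 ∧ j ≠ i + 2} → V |
          ∃ x ∈ C, ∀ j : {j : ZMod (8 * k) // j ≠ i + 1 ∧ j ≠ i + 2}, x j.1 = y j}).ncard : ℝ)
        ≤ β * (C.ncard : ℝ) / (16 * (k : ℝ) * s))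

/-- Definition 2.2: a `β`-nice set `C ⊆ V(G)^{8k}`. -/
def IsNice {V : Type*} (G : SimpleGraph V) (k : ℕ) (β : ℝ) (C : Set (ZMod (8 * k) → V)) :
    Prop :=
  (∀ x ∈ C, Function.Injective x ∧ ∀ i, G.Adj (x i) (x (i + 1))) ∧
  (∀ i : ZMod (8 * k), ∀ y : ZMod (8 * k) → V, ∀ u : V,
    (({x ∈ C | (∀ j, j ≠ i + 1 → j ≠ i + 2 → x j = y j) ∧
        (x (i + 1) = u ∨ x (i + 2) = u)}).ncard : ℝ)
      ≤ β * (({x ∈ C | ∀ j, j ≠ i + 1 → j ≠ i + 2 → x j = y j}).ncard : ℝ))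

end Paper

open Finset

namespace SimpleGraph

variable {V : Type*} [Fintype V] (G : SimpleGraph V) [DecidableRel G.Adj]

lemma ncard_neighborSet_eq_degree (v : V) : (G.neighborSet v).ncard = G.degree v := by
  rw [Set.ncard_eq_toFinset_card', Set.toFinset_card, card_neighborSet_eq_degree]

lemma card_leaves_add_mul_card_nonleaves_le {r : ℕ} (hdeg : ∀ v, G.degree v ≠ 1 → r ≤ G.degree v) :
    #{v | G.degree v = 1} + r * #{v | G.degree v ≠ 1} ≤ 2 * #G.edgeFinset := by
  rw [← sum_degrees_eq_twice_card_edges, ← sum_filter_add_sum_filter_not _ (G.degree · = 1)]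
  gcongr
  · rw [card_eq_sum_ones]
    exact sum_le_sum fun v hv => (mem_filter.1 hv).2.ge
  · rw [mul_comm, ← smul_eq_mul, ← sum_const]
    exact sum_le_sum fun v hv => hdeg v (mem_filter.1 hv).2

end SimpleGraph

lemma div_le_div_of_sub_two_mul_le_sub_two {r L M : ℝ} (hr : 3 ≤ r) (hM : 0 ≤ M)
    (h : (r - 2) * M ≤ L - 2) :
    M / (L + M - 1) ≤ (L - 2) / ((r - 1) * (L - 1) - 1) := by
  have hL : 2 ≤ L := by nlinarith
  rw [div_le_div_iff₀ (by linarith) (by nlinarith)]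
  nlinarith [mul_le_mul_of_nonneg_left h (by linarith : (0 : ℝ) ≤ L - 1)]

theorem statement_17_general {V : Type*} [Fintype V] (r : ℕ) (hr : 3 ≤ r) (G : SimpleGraph V)
    (htree : G.IsTree)
    (hdeg : ∀ v, (G.neighborSet v).ncard ≠ 1 → r ≤ (G.neighborSet v).ncard) :
    ((Fintype.card V : ℝ) - (({v | (G.neighborSet v).ncard = 1} : Set V).ncard : ℝ)) /
        (G.edgeSet.ncard : ℝ) ≤
      ((({v | (G.neighborSet v).ncard = 1} : Set V).ncard : ℝ) - 2) /
        (((r : ℝ) - 1) * ((({v | (G.neighborSet v).ncard = 1} : Set V).ncard : ℝ) - 1) - 1) := by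
  classical
  simp only [G.ncard_neighborSet_eq_degree] at hdeg ⊢
  have hleaves : {v | G.degree v = 1} = ((univ.filter (G.degree · = 1) : Finset V) : Set V) := by
    simp
  rw [hleaves, Set.ncard_coe_finset, ← SimpleGraph.coe_edgeFinset, Set.ncard_coe_finset]
  have hvert : (#{v | G.degree v = 1} : ℝ) + #{v | G.degree v ≠ 1} = Fintype.card V := by
    exact_mod_cast card_filter_add_card_filter_not (G.degree · = 1)
  have hedge : (#G.edgeFinset : ℝ) + 1 = Fintype.card V := by exact_mod_cast htree.card_edgeFinset
  have hsum : (#{v | G.degree v = 1} : ℝ) + r * #{v | G.degree v ≠ 1} ≤ 2 * #G.edgeFinset := by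
    exact_mod_cast G.card_leaves_add_mul_card_nonleaves_le hdeg
  rw [← hvert, add_sub_cancel_left,
    show (#G.edgeFinset : ℝ) = #{v | G.degree v = 1} + #{v | G.degree v ≠ 1} - 1 by linarith]
  exact div_le_div_of_sub_two_mul_le_sub_two (by exact_mod_cast hr) (by positivity) (by linarith)

/-- the inequality `(v(T) - ℓ(T))/e(T) ≤ (ℓ(T) - 2)/((r-1)(ℓ(T)-1) - 1)` for trees
whose non-leaf vertices all have degree at least `r`. -/
theorem statement_17 {V : Type*} [Fintype V] (r : ℕ) (hr : 3 ≤ r) (G : SimpleGraph V)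
    (htree : G.IsTree) (hcard : 2 ≤ Fintype.card V)
    (hdeg : ∀ v, (G.neighborSet v).ncard ≠ 1 → r ≤ (G.neighborSet v).ncard) :
    ((Fintype.card V : ℝ) - (({v | (G.neighborSet v).ncard = 1} : Set V).ncard : ℝ)) /
        (G.edgeSet.ncard : ℝ) ≤
      ((({v | (G.neighborSet v).ncard = 1} : Set V).ncard : ℝ) - 2) /
        (((r : ℝ) - 1) * ((({v | (G.neighborSet v).ncard = 1} : Set V).ncard : ℝ) - 1) - 1) :=
  statement_17_general r hr G htree hdeg
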